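/- Let I be an instance of (3,B2)-SAT with variables x₁,…,xₙ and clauses c₁,…,c_m. Let G = (V,E) be the finite simple graph with V = {c₁,…,c_m} ∪ ⋃_{i=1}^{n} {xᵢ, lᵢ, mᵢ, rᵢ, ¬xᵢ}, whose edge set consists of: the path edges xᵢlᵢ, lᵢmᵢ, mᵢrᵢ, rᵢ¬xᵢ for each i; an edge c_j xᵢ whenever xᵢ occurs positively in clause c_j; and an edge c_j ¬xᵢ whenever xᵢ occurs negatively in clause c_j. Let U = {xᵢlᵢ, ¬xᵢrᵢ : 1 ≤ i ≤ n}. Then I is satisfiable if and only if G has a minimal edge cover C with U ⊆ C. -/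

import Mathlib

/-- Vertices of the graph built from a (3,B2)-SAT instance for Ext Edge Cover:
one vertex per clause and, for each variable `xᵢ`, the path `xᵢ, lᵢ, mᵢ, rᵢ, ¬xᵢ`. -/
inductive V9 (n m : ℕ) : Type
  | clause : Fin m → V9 n m
  | pos : Fin n → V9 n m
  | l : Fin n → V9 n m
  | mid : Fin n → V9 n m
  | r : Fin n → V9 n m
  | neg : Fin n → V9 n m

/-- Edges: the path edges `xᵢlᵢ, lᵢmᵢ, mᵢrᵢ, rᵢ¬xᵢ` and the incidence edges
`c_j xᵢ` (positive occurrence) and `c_j ¬xᵢ` (negative occurrence). -/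
def E9 (n m : ℕ) (lit : Fin m → Fin 3 → Fin n × Bool) : Set (Sym2 (V9 n m)) :=
  {e | (∃ i : Fin n,
          e = s(V9.pos i, V9.l i) ∨ e = s(V9.l i, V9.mid i) ∨
          e = s(V9.mid i, V9.r i) ∨ e = s(V9.r i, V9.neg i)) ∨
       (∃ j : Fin m, ∃ k : Fin 3, ∃ i : Fin n,
          (lit j k = (i, true) ∧ e = s(V9.clause j, V9.pos i)) ∨
          (lit j k = (i, false) ∧ e = s(V9.clause j, V9.neg i)))}

/-- The pre-solution `U = {xᵢlᵢ, ¬xᵢrᵢ : 1 ≤ i ≤ n}`. -/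
def U9 (n m : ℕ) : Set (Sym2 (V9 n m)) :=
  {e | ∃ i : Fin n, e = s(V9.pos i, V9.l i) ∨ e = s(V9.neg i, V9.r i)}

/-!
Given a satisfying assignment `T`, take the edges of `U`, for each `i` the edge joining `mᵢ` to the
path neighbour of the false literal of `xᵢ`, and for each clause one edge to a true literal in it.
Every edge of this cover has an endpoint lying on no other edge of it (for an edge of `U`: the
path neighbour of a true literal, or a false literal itself, which no clause edge reaches), so the
cover is minimal.

Conversely, in a minimal edge cover no edge has both endpoints covered by other edges. If a clause
is covered by its edge to a literal, the edge of `U` at that literal therefore excludes the edge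
between `mᵢ` and that literal's path neighbour; as `mᵢ` is covered, the other middle edge is
present, and reading the value of `xᵢ` off which middle edge is present satisfies every clause.
-/

section EdgeCover

variable {α : Type*}

def IsEdgeCover (C : Set (Sym2 α)) : Prop := ∀ v, ∃ e ∈ C, v ∈ e

theorem Minimal.isEdgeCover_eq_or_eq {C : Set (Sym2 α)} (hC : Minimal IsEdgeCover C)
    {a b c d : α} (hab : s(a, b) ∈ C) (hac : s(a, c) ∈ C) (hbd : s(b, d) ∈ C) :
    c = b ∨ d = a := by
  by_contra! h
  refine hC.not_prop_of_ssubset (Set.sdiff_singleton_ssubset.2 hab) fun v => ?_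
  obtain ⟨e, he, hv⟩ := hC.prop v
  by_cases hne : e = s(a, b)
  · subst hne
    rcases Sym2.mem_iff.1 hv with rfl | rfl
    · exact ⟨s(v, c), ⟨hac, fun heq => h.1 (Sym2.congr_right.1 heq)⟩, Sym2.mem_mk_left _ _⟩
    · refine ⟨s(v, d), ⟨hbd, fun heq => h.2 ?_⟩, Sym2.mem_mk_left _ _⟩
      exact Sym2.congr_right.1 (heq.trans Sym2.eq_swap)
  · exact ⟨e, ⟨he, hne⟩, hv⟩

theorem minimal_isEdgeCover_of_forall_exists_private {C : Set (Sym2 α)} (hC : IsEdgeCover C)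
    (hpriv : ∀ e ∈ C, ∃ v ∈ e, ∀ e' ∈ C, v ∈ e' → e' = e) : Minimal IsEdgeCover C := by
  refine Set.minimal_iff_forall_ssubset.2 ⟨hC, fun C' hC' hcov => ?_⟩
  obtain ⟨e, heC, heC'⟩ := Set.exists_of_ssubset hC'
  obtain ⟨v, hv, huniq⟩ := hpriv e heC
  obtain ⟨e', he', hve'⟩ := hcov v
  exact heC' (huniq e' (hC'.subset he') hve' ▸ he')

end EdgeCover

namespace V9

variable {n m : ℕ}

def literal : Fin n × Bool → V9 n m
  | (i, true) => pos i
  | (i, false) => neg i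

def side : Fin n × Bool → V9 n m
  | (i, true) => l i
  | (i, false) => r i

@[simp] theorem literal_true (i : Fin n) : (literal (i, true) : V9 n m) = pos i := rfl
@[simp] theorem literal_false (i : Fin n) : (literal (i, false) : V9 n m) = neg i := rfl
@[simp] theorem side_true (i : Fin n) : (side (i, true) : V9 n m) = l i := rfl
@[simp] theorem side_false (i : Fin n) : (side (i, false) : V9 n m) = r i := rfl

@[simp] theorem literal_inj {x y : Fin n × Bool} : (literal x : V9 n m) = literal y ↔ x = y := by
  obtain ⟨i, _ | _⟩ := x <;> obtain ⟨i', _ | _⟩ := y <;> simp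

@[simp] theorem side_inj {x y : Fin n × Bool} : (side x : V9 n m) = side y ↔ x = y := by
  obtain ⟨i, _ | _⟩ := x <;> obtain ⟨i', _ | _⟩ := y <;> simp

@[simp] theorem literal_ne_side (x y : Fin n × Bool) : (literal x : V9 n m) ≠ side y := by
  obtain ⟨i, _ | _⟩ := x <;> obtain ⟨i', _ | _⟩ := y <;> simp

@[simp] theorem side_ne_literal (x y : Fin n × Bool) : (side x : V9 n m) ≠ literal y :=
  (literal_ne_side y x).symm

@[simp] theorem clause_ne_literal (j : Fin m) (x : Fin n × Bool) : clause j ≠ literal x := by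
  obtain ⟨i, _ | _⟩ := x <;> simp

@[simp] theorem literal_ne_clause (x : Fin n × Bool) (j : Fin m) : literal x ≠ clause j :=
  (clause_ne_literal j x).symm

@[simp] theorem clause_ne_side (j : Fin m) (x : Fin n × Bool) : clause j ≠ side x := by
  obtain ⟨i, _ | _⟩ := x <;> simp

@[simp] theorem side_ne_clause (x : Fin n × Bool) (j : Fin m) : side x ≠ clause j :=
  (clause_ne_side j x).symm

@[simp] theorem mid_ne_literal (i : Fin n) (x : Fin n × Bool) : (mid i : V9 n m) ≠ literal x := by
  obtain ⟨i, _ | _⟩ := x <;> simp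

@[simp] theorem literal_ne_mid (x : Fin n × Bool) (i : Fin n) : (literal x : V9 n m) ≠ mid i :=
  (mid_ne_literal i x).symm

@[simp] theorem mid_ne_side (i : Fin n) (x : Fin n × Bool) : (mid i : V9 n m) ≠ side x := by
  obtain ⟨i, _ | _⟩ := x <;> simp

@[simp] theorem side_ne_mid (x : Fin n × Bool) (i : Fin n) : (side x : V9 n m) ≠ mid i :=
  (mid_ne_side i x).symm

end V9

section Reduction

variable {n m : ℕ} {lit : Fin m → Fin 3 → Fin n × Bool}

theorem literal_side_mem_U9 (x : Fin n × Bool) :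
    s(V9.literal x, V9.side x) ∈ U9 n m := by
  obtain ⟨i, _ | _⟩ := x
  exacts [⟨i, Or.inr rfl⟩, ⟨i, Or.inl rfl⟩]

theorem mem_E9_iff {e : Sym2 (V9 n m)} :
    e ∈ E9 n m lit ↔ (∃ x : Fin n × Bool,
      e = s(V9.literal x, V9.side x) ∨ e = s(V9.side x, V9.mid x.1)) ∨
      ∃ j k, e = s(V9.clause j, V9.literal (lit j k)) := by
  constructor
  · rintro (⟨i, rfl | rfl | rfl | rfl⟩ | ⟨j, k, i, ⟨h, rfl⟩ | ⟨h, rfl⟩⟩)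
    · exact Or.inl ⟨(i, true), Or.inl rfl⟩
    · exact Or.inl ⟨(i, true), Or.inr rfl⟩
    · exact Or.inl ⟨(i, false), Or.inr Sym2.eq_swap⟩
    · exact Or.inl ⟨(i, false), Or.inl Sym2.eq_swap⟩
    · exact Or.inr ⟨j, k, by rw [h]; rfl⟩
    · exact Or.inr ⟨j, k, by rw [h]; rfl⟩
  · rintro (⟨⟨i, _ | _⟩, rfl | rfl⟩ | ⟨j, k, rfl⟩)
    · exact Or.inl ⟨i, Or.inr (Or.inr (Or.inr Sym2.eq_swap))⟩
    · exact Or.inl ⟨i, Or.inr (Or.inr (Or.inl Sym2.eq_swap))⟩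
    · exact Or.inl ⟨i, Or.inl rfl⟩
    · exact Or.inl ⟨i, Or.inr (Or.inl rfl)⟩
    · rcases h : lit j k with ⟨i, _ | _⟩
      exacts [Or.inr ⟨j, k, i, Or.inr ⟨h, rfl⟩⟩, Or.inr ⟨j, k, i, Or.inl ⟨h, rfl⟩⟩]

theorem exists_side_of_mid_mem {e : Sym2 (V9 n m)} (he : e ∈ E9 n m lit) {i : Fin n}
    (hi : V9.mid i ∈ e) : ∃ b, e = s(V9.side (i, b), V9.mid i) := by
  rcases mem_E9_iff.1 he with ⟨⟨i', _ | _⟩, rfl | rfl⟩ | ⟨j, k, rfl⟩ <;> simp at hi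
  exacts [⟨false, hi ▸ rfl⟩, ⟨true, hi ▸ rfl⟩]

theorem exists_literal_of_clause_mem {e : Sym2 (V9 n m)} (he : e ∈ E9 n m lit) {j : Fin m}
    (hj : V9.clause j ∈ e) : ∃ k, e = s(V9.clause j, V9.literal (lit j k)) := by
  rcases mem_E9_iff.1 he with ⟨⟨i', _ | _⟩, rfl | rfl⟩ | ⟨j', k, rfl⟩ <;> simp at hj
  exact ⟨k, hj ▸ rfl⟩

theorem satisfiable_of_minimal_isEdgeCover {C : Set (Sym2 (V9 n m))} (hCE : C ⊆ E9 n m lit)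
    (hU : U9 n m ⊆ C) (hC : Minimal IsEdgeCover C) :
    ∃ T : Fin n → Bool, ∀ j, ∃ k, T (lit j k).1 = (lit j k).2 := by
  classical
  have hforced : ∀ j x, s(V9.clause j, V9.literal x) ∈ C →
      s(V9.side x, V9.mid x.1) ∉ C ∧ s(V9.side (x.1, !x.2), V9.mid x.1) ∈ C := by
    rintro j ⟨i, b⟩ hjx
    have hnear : s(V9.side (i, b), V9.mid i) ∉ C := fun h => by
      have := hC.isEdgeCover_eq_or_eq (hU (literal_side_mem_U9 (i, b)))
        (Sym2.eq_swap ▸ hjx) h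
      cases b <;> simp at this
    obtain ⟨e, he, hmid⟩ := hC.prop (V9.mid i)
    obtain ⟨b', rfl⟩ := exists_side_of_mid_mem (hCE he) hmid
    obtain rfl : b' = !b := by cases b <;> cases b' <;> simp_all
    exact ⟨hnear, he⟩
  refine ⟨fun i => decide (s(V9.side (i, false), V9.mid i) ∈ C), fun j => ?_⟩
  obtain ⟨e, he, hj⟩ := hC.prop (V9.clause j)
  obtain ⟨k, rfl⟩ := exists_literal_of_clause_mem (hCE he) hj
  refine ⟨k, ?_⟩
  obtain ⟨hnear, hfar⟩ := hforced j _ he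
  generalize lit j k = x at hnear hfar
  obtain ⟨i, _ | _⟩ := x
  exacts [decide_eq_false hnear, decide_eq_true hfar]

def satCover (lit : Fin m → Fin 3 → Fin n × Bool) (T : Fin n → Bool) (w : Fin m → Fin 3) :
    Set (Sym2 (V9 n m)) :=
  (Set.range fun x : Fin n × Bool => s(V9.literal x, V9.side x)) ∪
    (Set.range fun i => s(V9.side (i, !T i), V9.mid i)) ∪
    Set.range fun j => s(V9.clause j, V9.literal (lit j (w j)))

theorem satCover_subset_E9 (T : Fin n → Bool) (w : Fin m → Fin 3) :
    satCover lit T w ⊆ E9 n m lit := by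
  rintro e ((⟨x, rfl⟩ | ⟨i, rfl⟩) | ⟨j, rfl⟩) <;> rw [mem_E9_iff]
  exacts [Or.inl ⟨x, Or.inl rfl⟩, Or.inl ⟨(i, !T i), Or.inr rfl⟩, Or.inr ⟨j, w j, rfl⟩]

theorem U9_subset_satCover (T : Fin n → Bool) (w : Fin m → Fin 3) :
    U9 n m ⊆ satCover lit T w := by
  rintro e ⟨i, rfl | rfl⟩
  exacts [Or.inl (Or.inl ⟨(i, true), rfl⟩), Or.inl (Or.inl ⟨(i, false), rfl⟩)]

theorem isEdgeCover_satCover (T : Fin n → Bool) (w : Fin m → Fin 3) :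
    IsEdgeCover (satCover lit T w) := by
  intro v
  cases v with
  | clause j => exact ⟨_, Or.inr ⟨j, rfl⟩, Sym2.mem_mk_left _ _⟩
  | pos i => exact ⟨_, Or.inl (Or.inl ⟨(i, true), rfl⟩), Sym2.mem_mk_left _ _⟩
  | neg i => exact ⟨_, Or.inl (Or.inl ⟨(i, false), rfl⟩), Sym2.mem_mk_left _ _⟩
  | l i => exact ⟨_, Or.inl (Or.inl ⟨(i, true), rfl⟩), Sym2.mem_mk_right _ _⟩
  | r i => exact ⟨_, Or.inl (Or.inl ⟨(i, false), rfl⟩), Sym2.mem_mk_right _ _⟩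
  | mid i => exact ⟨_, Or.inl (Or.inr ⟨i, rfl⟩), Sym2.mem_mk_right _ _⟩

theorem exists_private_of_mem_satCover {T : Fin n → Bool} {w : Fin m → Fin 3}
    (hw : ∀ j, T (lit j (w j)).1 = (lit j (w j)).2) {e : Sym2 (V9 n m)}
    (he : e ∈ satCover lit T w) : ∃ v ∈ e, ∀ e' ∈ satCover lit T w, v ∈ e' → e' = e := by
  rcases he with (⟨⟨i, b⟩, rfl⟩ | ⟨i, rfl⟩) | ⟨j, rfl⟩
  · by_cases hb : T i = b
    · refine ⟨V9.side (i, b), Sym2.mem_mk_right _ _, ?_⟩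
      rintro e' ((⟨⟨i', b'⟩, rfl⟩ | ⟨i', rfl⟩) | ⟨j', rfl⟩) hv <;> simp_all
    · refine ⟨V9.literal (i, b), Sym2.mem_mk_left _ _, ?_⟩
      rintro e' ((⟨⟨i', b'⟩, rfl⟩ | ⟨i', rfl⟩) | ⟨j', rfl⟩) hv
      · simp_all
      · simp_all
      · simp only [Sym2.mem_iff, V9.literal_ne_clause, V9.literal_inj, false_or] at hv
        exact absurd (by simpa [← hv] using hw j') hb
  · refine ⟨V9.mid i, Sym2.mem_mk_right _ _, ?_⟩
    rintro e' ((⟨⟨i', b'⟩, rfl⟩ | ⟨i', rfl⟩) | ⟨j', rfl⟩) hv <;> simp_all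
  · refine ⟨V9.clause j, Sym2.mem_mk_left _ _, ?_⟩
    rintro e' ((⟨⟨i', b'⟩, rfl⟩ | ⟨i', rfl⟩) | ⟨j', rfl⟩) hv <;> simp_all

theorem exists_minimal_isEdgeCover_of_satisfiable {T : Fin n → Bool}
    (hT : ∀ j, ∃ k, T (lit j k).1 = (lit j k).2) :
    ∃ C ⊆ E9 n m lit, U9 n m ⊆ C ∧ Minimal IsEdgeCover C := by
  choose w hw using hT
  exact ⟨satCover lit T w, satCover_subset_E9 T w, U9_subset_satCover T w,
    minimal_isEdgeCover_of_forall_exists_private (isEdgeCover_satCover T w)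
      fun _ => exists_private_of_mem_satCover hw⟩

end Reduction

theorem stmt_9 (n m : ℕ) (lit : Fin m → Fin 3 → Fin n × Bool) :
    (∃ T : Fin n → Bool, ∀ j : Fin m, ∃ k : Fin 3, T (lit j k).1 = (lit j k).2) ↔
      (∃ C : Set (Sym2 (V9 n m)), C ⊆ E9 n m lit ∧ U9 n m ⊆ C ∧
        (∀ v : V9 n m, ∃ e ∈ C, v ∈ e) ∧
        ∀ C' : Set (Sym2 (V9 n m)), C' ⊂ C → ¬ ∀ v : V9 n m, ∃ e ∈ C', v ∈ e) := by
  constructor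
  · rintro ⟨T, hT⟩
    obtain ⟨C, hCE, hU, hC⟩ := exists_minimal_isEdgeCover_of_satisfiable hT
    exact ⟨C, hCE, hU, Set.minimal_iff_forall_ssubset.1 hC⟩
  · rintro ⟨C, hCE, hU, hcov, hmin⟩
    exact satisfiable_of_minimal_isEdgeCover hCE hU
      (Set.minimal_iff_forall_ssubset.2 ⟨hcov, hmin⟩)
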